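/- Fix K ∈ ℕ, battery bounds l_min ≤ l_max in ℝ, initial level λ₀ with l_min ≤ λ₀ ≤ l_max, energy consumptions e_k ≥ 0 and caps c_k ≥ 0 for k = 0, …, K−1, and let G denote the greedy levels. Let 0 ≤ j ≤ K−1 and let ē ≥ 0 be the energy needed to deadhead from the end of opportunity j back to the depot. If G_k ≥ l_min for all k ≤ j and G_j − ē ≥ l_min, then the truncated charging problem with consumptions e_0, …, e_{j−1}, ē (and the same bounds, initial level, and caps c_0, …, c_j, with zero cap granted at the final depot arrival) is charge-feasible. (This justifies splitting an infeasible rotation at the last trip from which the bus can still return to the depot without its charge dropping below l_min.) -/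

import Mathlib

/-!
Charge greedily: at each opportunity take `min (c k) (lmax - G k)`. Under this schedule the
truncated problem follows the greedy levels up to opportunity `j`, since it has the same
consumptions there, and the final deadhead leaves at least `G j - ebar ≥ lmin` because the
last charge is nonnegative.
-/

/-- Battery levels of a charging schedule `w`: `L 0 = lam0`,
`L (k+1) = L k + w k - e k`. -/
def batteryLevels (lam0 : ℝ) (e w : ℕ → ℝ) : ℕ → ℝ
  | 0 => lam0
  | k + 1 => batteryLevels lam0 e w k + w k - e k

/-- Greedy (maximum-rate) battery levels: `G 0 = lam0`,
`G (k+1) = min lmax (G k + c k) - e k`. -/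
def greedyLevels (lam0 lmax : ℝ) (e c : ℕ → ℝ) : ℕ → ℝ
  | 0 => lam0
  | k + 1 => min lmax (greedyLevels lam0 lmax e c k + c k) - e k

def greedySchedule (lam0 lmax : ℝ) (e c : ℕ → ℝ) (k : ℕ) : ℝ :=
  min (c k) (lmax - greedyLevels lam0 lmax e c k)

section Greedy

variable {lam0 lmax : ℝ} {e c : ℕ → ℝ}

theorem greedyLevels_le (h0 : lam0 ≤ lmax) {n : ℕ} (he : ∀ k < n, 0 ≤ e k) :
    ∀ k ≤ n, greedyLevels lam0 lmax e c k ≤ lmax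
  | 0, _ => h0
  | k + 1, hk => by
    have hek := he k hk
    have := min_le_left lmax (greedyLevels lam0 lmax e c k + c k)
    rw [greedyLevels]
    linarith

theorem greedySchedule_nonneg {k : ℕ} (hc : 0 ≤ c k) (hG : greedyLevels lam0 lmax e c k ≤ lmax) :
    0 ≤ greedySchedule lam0 lmax e c k :=
  le_min hc (sub_nonneg.mpr hG)

theorem greedySchedule_le (k : ℕ) : greedySchedule lam0 lmax e c k ≤ c k :=
  min_le_left _ _

theorem greedyLevels_add_greedySchedule (k : ℕ) :
    greedyLevels lam0 lmax e c k + greedySchedule lam0 lmax e c k =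
      min lmax (greedyLevels lam0 lmax e c k + c k) := by
  rw [greedySchedule, ← min_add_add_left, add_sub_cancel, min_comm]

theorem batteryLevels_greedySchedule {e' : ℕ → ℝ} {n : ℕ} (he' : ∀ k < n, e' k = e k) :
    ∀ k ≤ n, batteryLevels lam0 e' (greedySchedule lam0 lmax e c) k =
      greedyLevels lam0 lmax e c k
  | 0, _ => rfl
  | k + 1, hk => by
    rw [batteryLevels, greedyLevels, batteryLevels_greedySchedule he' k (by omega),
      greedyLevels_add_greedySchedule, he' k hk]

end Greedy

theorem stmt6_general (K : ℕ) (lmin lmax lam0 : ℝ) (e c : ℕ → ℝ) (j : ℕ) (ebar : ℝ)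
    (h0' : lam0 ≤ lmax)
    (hj : j ≤ K - 1) (hK : 1 ≤ K)
    (he : ∀ k < K, 0 ≤ e k) (hc : ∀ k < K, 0 ≤ c k)
    (hG : ∀ k ≤ j, lmin ≤ greedyLevels lam0 lmax e c k)
    (hGj : lmin ≤ greedyLevels lam0 lmax e c j - ebar) :
    ∃ w : ℕ → ℝ,
      (∀ k < j + 1, 0 ≤ w k ∧ w k ≤ c k ∧
        batteryLevels lam0 (fun i => if i = j then ebar else e i) w k + w k ≤ lmax) ∧
      (∀ k ≤ j + 1,
        lmin ≤ batteryLevels lam0 (fun i => if i = j then ebar else e i) w k) := by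
  set w := greedySchedule lam0 lmax e c
  have hGle : ∀ k ≤ j, greedyLevels lam0 lmax e c k ≤ lmax :=
    greedyLevels_le h0' fun k hk => he k (by omega)
  have hw : ∀ k ≤ j, 0 ≤ w k := fun k hk => greedySchedule_nonneg (hc k (by omega)) (hGle k hk)
  have hL : ∀ k ≤ j, batteryLevels lam0 (fun i => if i = j then ebar else e i) w k =
      greedyLevels lam0 lmax e c k :=
    batteryLevels_greedySchedule fun k hk => if_neg hk.ne
  refine ⟨w, fun k hk => ⟨hw k (by omega), greedySchedule_le k, ?_⟩, fun k hk => ?_⟩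
  · rw [hL k (by omega), greedyLevels_add_greedySchedule]
    exact min_le_left _ _
  · rcases Nat.le_succ_iff.mp hk with hk | rfl
    · exact hL k hk ▸ hG k hk
    · rw [batteryLevels, hL j le_rfl, if_pos rfl]
      linarith [hw j le_rfl]

/-- If the greedy levels stay above `lmin` up to opportunity `j`
and the bus can deadhead back to the depot from there (consuming `ebar`)
without dropping below `lmin`, then the truncated charging problem with
consumptions `e 0, …, e (j-1), ebar` is charge-feasible. -/
theorem stmt6 (K : ℕ) (lmin lmax lam0 : ℝ) (e c : ℕ → ℝ) (j : ℕ) (ebar : ℝ)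
    (hbounds : lmin ≤ lmax) (h0 : lmin ≤ lam0) (h0' : lam0 ≤ lmax)
    (hj : j ≤ K - 1) (hK : 1 ≤ K) (hebar : 0 ≤ ebar)
    (he : ∀ k < K, 0 ≤ e k) (hc : ∀ k < K, 0 ≤ c k)
    (hG : ∀ k ≤ j, lmin ≤ greedyLevels lam0 lmax e c k)
    (hGj : lmin ≤ greedyLevels lam0 lmax e c j - ebar) :
    ∃ w : ℕ → ℝ,
      (∀ k < j + 1, 0 ≤ w k ∧ w k ≤ c k ∧
        batteryLevels lam0 (fun i => if i = j then ebar else e i) w k + w k ≤ lmax) ∧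
      (∀ k ≤ j + 1,
        lmin ≤ batteryLevels lam0 (fun i => if i = j then ebar else e i) w k) :=
  stmt6_general K lmin lmax lam0 e c j ebar h0' hj hK he hc hG hGj
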